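/- Let A be a noetherian commutative ring graded by an abelian group ι, and let Q be a homogeneous ideal of A. Then Q is G-primary if and only if Q = 𝔮* for some primary ideal 𝔮 of A. -/

import Mathlib

/-!
If `𝔮` is primary, `I * J ≤ 𝔮*` with `J ⊄ 𝔮*` forces `I ≤ √𝔮`; for homogeneous `I` this gives
`I ≤ (√𝔮)* ≤ (√(𝔮*))*`, because a power of a homogeneous element is homogeneous, so if it lies
in `𝔮` it lies in `𝔮*`.

Conversely, take a minimal primary decomposition `Q = ⋂ qᵢ` and a component `q` whose radical is a
minimal prime of `Q`; then `Q ≤ q*`. If a homogeneous `a ∈ q` were not in `Q`, `G`-primality applied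
to `(Q : a) * (a) ≤ Q` would give `(Q : a) ≤ √Q ≤ √q`. But `(Q : a)` contains the intersection of the
other components, so one of them lies in the prime `√q`; its radical is then a prime between `Q` and
`√q`, hence equal to `√q`, although the components of a minimal decomposition have distinct
radicals. So `q* ≤ Q`.
-/

/-- A homogeneous ideal `Q` of a graded ring `A` is `G`-primary if `Q ≠ A` and for all
homogeneous ideals `I`, `J` with `I·J ⊆ Q` and `J ⊄ Q`, one has `I ⊆ (√Q)*`. -/
def Ideal.IsGPrimary {ι : Type*} [AddCommGroup ι] [DecidableEq ι] {A : Type*} [CommRing A]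
    (𝒜 : ι → AddSubgroup A) [GradedRing 𝒜] (Q : Ideal A) : Prop :=
  Q ≠ ⊤ ∧ ∀ I J : Ideal A, I.IsHomogeneous 𝒜 → J.IsHomogeneous 𝒜 →
    I * J ≤ Q → ¬ J ≤ Q → I ≤ (Q.radical.homogeneousCore 𝒜).toIdeal

lemma Ideal.IsPrimary.le_radical_of_mul_le {R : Type*} [CommSemiring R] {𝔮 I J : Ideal R}
    (h𝔮 : 𝔮.IsPrimary) (hIJ : I * J ≤ 𝔮) (hJ : ¬ J ≤ 𝔮) : I ≤ 𝔮.radical := by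
  obtain ⟨y, hyJ, hy𝔮⟩ := SetLike.not_le_iff_exists.mp hJ
  intro x hx
  exact ((isPrimary_iff.mp h𝔮).2 (mul_comm x y ▸ hIJ (mul_mem_mul hx hyJ))).resolve_left hy𝔮

lemma Submodule.IsMinimalPrimaryDecomposition.not_colon_singleton_le_radical {R : Type*}
    [CommSemiring R] {Q q : Ideal R} {t : Finset (Ideal R)}
    (ht : Submodule.IsMinimalPrimaryDecomposition Q t) (hq : q ∈ t)
    (hmin : q.radical ∈ Q.minimalPrimes) {a : R} (ha : a ∈ q) :
    ¬ Q.colon {a} ≤ q.radical := by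
  classical
  intro hle
  have herase : (t.erase q).inf id ≤ Q.colon {a} := by
    intro c hc
    rw [mem_colon_singleton, smul_eq_mul, ← ht.inf_eq, mem_finsetInf]
    intro J hJ
    rcases eq_or_ne J q with rfl | hne
    · exact Ideal.mul_mem_left J c ha
    · exact Ideal.mul_mem_right a J (Finset.inf_le (f := id) (Finset.mem_erase.mpr ⟨hne, hJ⟩) hc)
  obtain ⟨J, hJ, hJq⟩ := (Ideal.isPrime_radical (ht.primary hq)).inf_le'.mp (herase.trans hle)
  obtain ⟨hne, hJt⟩ := Finset.mem_erase.mp hJ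
  have hQJ : Q ≤ J.radical := ht.inf_eq ▸ (Finset.inf_le hJt).trans Ideal.le_radical
  have hrad : J.radical = q.radical := le_antisymm (Ideal.radical_le_radical_iff.mpr hJq)
    (hmin.2 ⟨Ideal.isPrime_radical (ht.primary hJt), hQJ⟩ (Ideal.radical_le_radical_iff.mpr hJq))
  exact ht.distinct hJt hq hne (by simpa only [colon_univ] using hrad)

lemma Ideal.IsHomogeneous.colon_singleton {ι : Type*} [DecidableEq ι] [AddRightCancelMonoid ι]
    {A σ : Type*} [CommSemiring A] [SetLike σ A] [AddSubmonoidClass σ A] {𝒜 : ι → σ}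
    [GradedRing 𝒜] {Q : Ideal A} (hQ : Q.IsHomogeneous 𝒜) {a : A}
    (ha : SetLike.IsHomogeneousElem 𝒜 a) : (Q.colon {a}).IsHomogeneous 𝒜 := by
  obtain ⟨d, ha⟩ := ha
  intro i b hb
  rw [Submodule.mem_colon_singleton, smul_eq_mul] at hb ⊢
  simpa only [DirectSum.coe_decompose_mul_add_of_right_mem 𝒜 ha] using hQ (i + d) hb

namespace Ideal

section HomogeneousCore

variable {ι : Type*} [DecidableEq ι] [AddMonoid ι] {A σ : Type*} [CommSemiring A] [SetLike σ A]
  [AddSubmonoidClass σ A] (𝒜 : ι → σ) [GradedRing 𝒜]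

lemma toIdeal_homogeneousCore_le_of_forall {I J : Ideal A}
    (h : ∀ x, SetLike.IsHomogeneousElem 𝒜 x → x ∈ I → x ∈ J) :
    (I.homogeneousCore 𝒜).toIdeal ≤ J :=
  span_le.mpr <| by rintro _ ⟨⟨x, hx⟩, hxI, rfl⟩; exact h x hx hxI

lemma IsHomogeneous.le_toIdeal_homogeneousCore {I J : Ideal A} (hI : I.IsHomogeneous 𝒜)
    (h : I ≤ J) : I ≤ (J.homogeneousCore 𝒜).toIdeal :=
  calc I = (I.homogeneousCore 𝒜).toIdeal := hI.toIdeal_homogeneousCore_eq_self.symm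
    _ ≤ (J.homogeneousCore 𝒜).toIdeal := homogeneousCore_mono 𝒜 h

lemma toIdeal_homogeneousCore_radical_le (I : Ideal A) :
    (I.radical.homogeneousCore 𝒜).toIdeal ≤ (I.homogeneousCore 𝒜).toIdeal.radical :=
  toIdeal_homogeneousCore_le_of_forall 𝒜 fun _ ⟨i, hx⟩ ⟨n, hxn⟩ ↦
    ⟨n, mem_homogeneousCore_of_homogeneous_of_mem ⟨n • i, SetLike.pow_mem_graded n hx⟩ hxn⟩

end HomogeneousCore

variable {ι : Type*} [AddCommGroup ι] [DecidableEq ι] {A : Type*} [CommRing A]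
  {𝒜 : ι → AddSubgroup A} [GradedRing 𝒜] {Q : Ideal A}

lemma IsPrimary.isGPrimary_toIdeal_homogeneousCore {𝔮 : Ideal A} (h𝔮 : 𝔮.IsPrimary) :
    (𝔮.homogeneousCore 𝒜).toIdeal.IsGPrimary 𝒜 := by
  refine ⟨fun h ↦ h𝔮.ne_top (top_le_iff.mp (h ▸ toIdeal_homogeneousCore_le 𝒜 𝔮)),
    fun I J hI hJ hIJ hJ𝔮 ↦ ?_⟩
  have hI𝔮 : I ≤ 𝔮.radical :=
    h𝔮.le_radical_of_mul_le (hIJ.trans (toIdeal_homogeneousCore_le 𝒜 𝔮))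
      fun h ↦ hJ𝔮 (hJ.le_toIdeal_homogeneousCore 𝒜 h)
  exact hI.le_toIdeal_homogeneousCore 𝒜
    ((hI.le_toIdeal_homogeneousCore 𝒜 hI𝔮).trans (toIdeal_homogeneousCore_radical_le 𝒜 𝔮))

lemma IsGPrimary.colon_singleton_le_radical (hQ : Q.IsGPrimary 𝒜) (hQh : Q.IsHomogeneous 𝒜)
    {a : A} (ha : SetLike.IsHomogeneousElem 𝒜 a) (haQ : a ∉ Q) : Q.colon {a} ≤ Q.radical := by
  have hmul : Q.colon {a} * span {a} ≤ Q := by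
    rw [mul_comm, span_singleton_mul_le_iff]
    intro z hz
    simpa only [mul_comm, Submodule.mem_colon_singleton, smul_eq_mul] using hz
  have hspan : (span {a}).IsHomogeneous 𝒜 := homogeneous_span 𝒜 {a} (by simpa using ha)
  exact (hQ.2 _ _ (hQh.colon_singleton ha) hspan hmul (by rwa [span_singleton_le_iff_mem])).trans
    (toIdeal_homogeneousCore_le 𝒜 _)

lemma IsGPrimary.exists_isPrimary [IsNoetherianRing A] (hQ : Q.IsGPrimary 𝒜)
    (hQh : Q.IsHomogeneous 𝒜) :
    ∃ 𝔮 : Ideal A, 𝔮.IsPrimary ∧ Q = (𝔮.homogeneousCore 𝒜).toIdeal := by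
  obtain ⟨t, ht⟩ :=
    Submodule.IsLasker.exists_isMinimalPrimaryDecomposition (Submodule.isLasker A A) Q
  obtain ⟨p, hp⟩ := nonempty_minimalPrimes hQ.1
  obtain ⟨q, hq, rfl⟩ := IsMinimalPrimaryDecomposition.minimalPrimes_subset_image_radical ht hp
  have hQq : Q ≤ q := ht.inf_eq ▸ Finset.inf_le (f := id) hq
  refine ⟨q, ht.primary hq, le_antisymm (hQh.le_toIdeal_homogeneousCore 𝒜 hQq)
    (toIdeal_homogeneousCore_le_of_forall 𝒜 fun a ha haq ↦ ?_)⟩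
  by_contra haQ
  exact ht.not_colon_singleton_le_radical hq hp haq
    ((hQ.colon_singleton_le_radical hQh ha haQ).trans (radical_mono hQq))

end Ideal

/-- A homogeneous ideal `Q` of a noetherian graded ring is `G`-primary if and only if
`Q = 𝔮*` (the homogeneous core) for some primary ideal `𝔮`. -/
theorem Ideal.isGPrimary_iff {ι : Type*} [AddCommGroup ι] [DecidableEq ι]
    {A : Type*} [CommRing A] [IsNoetherianRing A]
    (𝒜 : ι → AddSubgroup A) [GradedRing 𝒜] (Q : Ideal A) (hQ : Q.IsHomogeneous 𝒜) :
    Q.IsGPrimary 𝒜 ↔ ∃ 𝔮 : Ideal A, 𝔮.IsPrimary ∧ Q = (𝔮.homogeneousCore 𝒜).toIdeal := by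
  refine ⟨fun h ↦ h.exists_isPrimary hQ, ?_⟩
  rintro ⟨𝔮, h𝔮, rfl⟩
  exact h𝔮.isGPrimary_toIdeal_homogeneousCore
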